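/- Let X be a topological space and Ψ a finite set. For each ψ ∈ Ψ, let (A_{ψ,j})_{j≥0} be a decreasing sequence of closed subsets of X with A_{ψ,0} = X, and assume that for each ψ there exists j with A_{ψ,j} = ∅. Let χ ∈ Ψ, let i be a natural number, and let V be an irreducible component of A_{χ,i}. Define P(ψ) = max{j : V ⊆ A_{ψ,j}} for each ψ ∈ Ψ, and set I = Σ_{ψ∈Ψ} P(ψ). Then V is an irreducible component of the set B_I = ⋃ ⋂_{ψ∈Ψ} A_{ψ,P'(ψ)}, where the union is over all functions P' : Ψ → ℕ with Σ_{ψ∈Ψ} P'(ψ) = I. -/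
import Mathlib


/-- `V` is an irreducible component of the subset `S` of a topological space if `V` is a
maximal irreducible subset of `S`. -/
def IsIrreducibleComponentOf {X : Type*} [TopologicalSpace X] (V S : Set X) : Prop :=
  V ⊆ S ∧ IsIrreducible V ∧ ∀ T : Set X, IsIrreducible T → T ⊆ S → V ⊆ T → T = V

/-- Let `(A ψ j)_j` be decreasing sequences of closed sets starting at `X` and eventually
empty, `V` an irreducible component of `A χ i`, and `P ψ = max {j : V ⊆ A ψ j}`.
Then `V` is an irreducible component of the union over all `P'` with
`Σ P' = Σ P` of `⋂_ψ A ψ (P' ψ)`. -/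
theorem irreducibleComponent_of_union_inter
    {X : Type*} [TopologicalSpace X] {Ψ : Type*} [Fintype Ψ]
    (A : Ψ → ℕ → Set X)
    (hclosed : ∀ ψ j, IsClosed (A ψ j))
    (hanti : ∀ ψ, Antitone (A ψ))
    (htop : ∀ ψ, A ψ 0 = Set.univ)
    (hempty : ∀ ψ, ∃ j, A ψ j = ∅)
    (χ : Ψ) (i : ℕ) (V : Set X) (hV : IsIrreducibleComponentOf V (A χ i))
    (P : Ψ → ℕ)
    (hPmem : ∀ ψ, V ⊆ A ψ (P ψ))
    (hPmax : ∀ ψ, ∀ j, V ⊆ A ψ j → j ≤ P ψ) :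
    IsIrreducibleComponentOf V
      (⋃ P' ∈ {P' : Ψ → ℕ | ∑ ψ, P' ψ = ∑ ψ, P ψ}, ⋂ ψ, A ψ (P' ψ)) := by
  classical
  obtain ⟨hVsub, hVirr, hVmax⟩ := hV
  set I := ∑ ψ, P ψ with hI
  set S : Set (Ψ → ℕ) := {P' : Ψ → ℕ | ∑ ψ, P' ψ = ∑ ψ, P ψ} with hS
  -- S is finite
  have hSfin : S.Finite := by
    apply Set.Finite.subset (Set.Finite.pi (fun _ : Ψ => Set.finite_Iic I))
    intro P' hP'
    intro ψ _
    simp only [Set.mem_Iic]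
    calc P' ψ ≤ ∑ φ, P' φ := Finset.single_le_sum (fun _ _ => Nat.zero_le _) (Finset.mem_univ ψ)
    _ = I := hP'
  refine ⟨?_, hVirr, ?_⟩
  · intro x hx
    exact Set.mem_biUnion (show P ∈ S from rfl) (Set.mem_iInter.mpr fun ψ => hPmem ψ hx)
  · intro T hTirr hTsub hVT
    -- T is contained in one of the closed pieces
    have : ∃ P' ∈ S, T ⊆ ⋂ ψ, A ψ (P' ψ) := by
      have := (isIrreducible_iff_sUnion_isClosed.mp hTirr)
        (hSfin.toFinset.image (fun P' => ⋂ ψ, A ψ (P' ψ))) ?_ ?_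
      · obtain ⟨z, hz, hTz⟩ := this
        simp only [Finset.mem_image, Set.Finite.mem_toFinset] at hz
        obtain ⟨P', hP', rfl⟩ := hz
        exact ⟨P', hP', hTz⟩
      · intro z hz
        simp only [Finset.mem_image, Set.Finite.mem_toFinset] at hz
        obtain ⟨P', _, rfl⟩ := hz
        exact isClosed_iInter (fun ψ => hclosed ψ (P' ψ))
      · intro x hx
        obtain ⟨s, hs, hxs⟩ := Set.mem_iUnion₂.mp (hTsub hx)
        exact ⟨⋂ ψ, A ψ (s ψ), by
          simp only [Finset.coe_image, Set.mem_image, Set.Finite.coe_toFinset]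
          exact ⟨s, hs, rfl⟩, hxs⟩
    obtain ⟨P', hP'S, hTP'⟩ := this
    -- P' ≤ P pointwise, sums equal ⟹ P' = P
    have hle : ∀ ψ, P' ψ ≤ P ψ := fun ψ =>
      hPmax ψ (P' ψ) (hVT.trans (hTP'.trans (Set.iInter_subset _ ψ)))
    have heq : ∀ ψ, P' ψ = P ψ := by
      have := (Finset.sum_eq_sum_iff_of_le (fun ψ _ => hle ψ)).mp hP'S
      exact fun ψ => this ψ (Finset.mem_univ ψ)
    have hTchi : T ⊆ A χ i := by
      have h1 : T ⊆ A χ (P χ) := heq χ ▸ (hTP'.trans (Set.iInter_subset _ χ))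
      exact h1.trans (hanti χ (hPmax χ i hVsub))
    exact hVmax T hTirr hTchi hVT
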